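/- Consider the Heston–Nandi model: on (Ω, F, ℙ), (ε_n)_{n=1}^T i.i.d. standard normal, F_n = σ(ε_1,…,ε_n), λ ∈ ℝ, log-prices s_n − s_{n−1} = λσ_n² + σ_nε_n with σ_n² = α_0 + Σ_{i=1}^q α_i (ε_{n−i} − γ_i σ_{n−i})² + Σ_{j=1}^p β_j σ_{n−j}² (α_0 > 0, α_i, β_j ≥ 0, γ_i ∈ ℝ, given strictly positive initial data), and prices S_n = exp(s_n). Let Q be the measure with density Π_{k=1}^T exp(−(λ+½)σ_kε_k − (λ+½)²σ_k²/2) with respect to ℙ. Then: (a) the variables ε̃_n := ε_n + (λ+½)σ_n are i.i.d. standard normal under Q; (b) s_n − s_{n−1} = −σ_n²/2 + σ_nε̃_n and σ_n² = α_0 + Σ_{i=1}^q α_i (ε̃_{n−i} − (λ + γ_i + ½)σ_{n−i})² + Σ_{j=1}^p β_j σ_{n−j}²; and (c) the price process (S_n)_{n=0}^T is a martingale with respect to (F_n) under Q. -/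

import Mathlib

/-!
Write `θ = λ + ½` and `D_n = ∏_{k ≤ n} exp(-θσ_kε_k - θ²σ_k²/2)`. By the GARCH recursion `σ_n`
is a function of `ε_1, …, ε_{n-1}`, while `ε_n` is standard normal and independent of
`F_{n-1}`. Conditionally on `F_{n-1}` the Cameron–Martin identity
`E[exp(-cε - c²/2) f(ε + c)] = E[f(ε)]` with `c = θσ_n` therefore says that multiplying by the
`n`-th factor of the density turns `ε̃_n = ε_n + θσ_n` into a standard normal variable
independent of the past. Iterating gives `E_P[D_T ∏ g_k(ε̃_k)] = ∏ E[g_k(N)]`, which is (a).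
Part (b) is algebra, and (c) follows in the same way, since `S_n / S_{n-1} = exp(σ_nε̃_n - σ_n²/2)`
and `E[exp(vN - v²/2)] = 1`.
-/

open MeasureTheory ProbabilityTheory Real
open scoped ENNReal

noncomputable def girsanovFactor (b x : ℝ) : ℝ≥0∞ := ENNReal.ofReal (exp (-(b * x) - b ^ 2 / 2))

@[fun_prop]
theorem Measurable.girsanovFactor {α : Type*} {mα : MeasurableSpace α} {f g : α → ℝ}
    (hf : Measurable f) (hg : Measurable g) :
    Measurable fun a => girsanovFactor (f a) (g a) := by
  unfold _root_.girsanovFactor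
  fun_prop

theorem lintegral_girsanovFactor_mul_comp_add (c : ℝ) {f : ℝ → ℝ≥0∞} (hf : Measurable f) :
    ∫⁻ x, girsanovFactor c x * f (x + c) ∂gaussianReal 0 1 = ∫⁻ x, f x ∂gaussianReal 0 1 := by
  have hpdf (x : ℝ) : gaussianPDF 0 1 x * girsanovFactor c x = gaussianPDF 0 1 (x + c) := by
    rw [gaussianPDF, gaussianPDF, girsanovFactor,
      ← ENNReal.ofReal_mul (gaussianPDFReal_nonneg _ _ _), gaussianPDFReal, gaussianPDFReal,
      mul_assoc, ← exp_add]
    simp only [NNReal.coe_one, sub_zero]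
    congr 3
    ring
  rw [gaussianReal_of_var_ne_zero 0 one_ne_zero,
    lintegral_withDensity_eq_lintegral_mul _ (measurable_gaussianPDF 0 1) (by fun_prop),
    lintegral_withDensity_eq_lintegral_mul _ (measurable_gaussianPDF 0 1) hf]
  simp_rw [Pi.mul_apply, ← mul_assoc, hpdf]
  exact lintegral_add_right_eq_self (fun x => gaussianPDF 0 1 x * f x) c

theorem lintegral_exp_mul_sub_sq_half_gaussianReal (v : ℝ) :
    ∫⁻ x, ENNReal.ofReal (exp (v * x - v ^ 2 / 2)) ∂gaussianReal 0 1 = 1 := by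
  have h := lintegral_girsanovFactor_mul_comp_add (-v) (f := fun _ => 1) measurable_const
  simp only [mul_one, lintegral_const, measure_univ] at h
  rw [← h]
  congr with x
  rw [girsanovFactor]
  ring_nf

theorem ProbabilityTheory.IndepFun.lintegral_comp_prodMk {Ω α β : Type*}
    {mΩ : MeasurableSpace Ω} {mα : MeasurableSpace α} {mβ : MeasurableSpace β} {μ : Measure Ω}
    [IsFiniteMeasure μ] {X : Ω → α} {Y : Ω → β} (h : IndepFun X Y μ) (hX : Measurable X)
    (hY : Measurable Y) {f : α × β → ℝ≥0∞} (hf : Measurable f) :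
    ∫⁻ ω, f (X ω, Y ω) ∂μ = ∫⁻ ω, ∫⁻ y, f (X ω, y) ∂(μ.map Y) ∂μ := by
  rw [← lintegral_map hf (hX.prodMk hY),
    h.map_prod_eq_prod_map_map hX.aemeasurable hY.aemeasurable,
    lintegral_prod _ hf.aemeasurable, lintegral_map hf.lintegral_prod_right' hX]

section ProductLaw

variable {Ω ι : Type*} {mΩ : MeasurableSpace Ω} {μ : Measure Ω} [Fintype ι] {β : ι → Type*}
  {mβ : ∀ i, MeasurableSpace (β i)} {f : ∀ i, Ω → β i} {ν : ∀ i, Measure (β i)}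
  [∀ i, IsProbabilityMeasure (ν i)]

theorem map_eq_of_map_fun_eq_pi (hf : ∀ i, Measurable (f i))
    (h : μ.map (fun ω i => f i ω) = Measure.pi ν) (i : ι) : μ.map (f i) = ν i := by
  rw [← (measurePreserving_eval ν i).map_eq, ← h,
    Measure.map_map (measurable_pi_apply i) (measurable_pi_lambda _ hf)]
  rfl

theorem iIndepFun_of_map_fun_eq_pi (hf : ∀ i, Measurable (f i))
    (h : μ.map (fun ω i => f i ω) = Measure.pi ν) : iIndepFun f μ := by
  have : IsProbabilityMeasure (μ.map fun ω i => f i ω) := h ▸ inferInstance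
  have := Measure.isProbabilityMeasure_of_map (fun ω i => f i ω) (μ := μ)
  rw [iIndepFun_iff_map_fun_eq_pi_map fun i => (hf i).aemeasurable, h]
  exact congrArg Measure.pi (funext fun i => (map_eq_of_map_fun_eq_pi hf h i).symm)

end ProductLaw

/-- `ξ (n + 1)` is the innovation revealed at time `n + 1`; `ξ 0` plays no role. -/
structure GaussianInnovations {Ω : Type*} {m0 : MeasurableSpace Ω} (P : Measure Ω)
    (F : Filtration ℕ m0) (ξ : ℕ → Ω → ℝ) (T : ℕ) : Prop where
  adapted : ∀ n, Measurable[F (n + 1)] (ξ (n + 1))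
  indep : ∀ n < T, Indep (F n) (MeasurableSpace.comap (ξ (n + 1)) inferInstance) P
  map_eq : ∀ n < T, P.map (ξ (n + 1)) = gaussianReal 0 1

noncomputable def girsanovDensity {Ω : Type*} (ξ b : ℕ → Ω → ℝ) (n : ℕ) (ω : Ω) : ℝ≥0∞ :=
  ∏ k ∈ Finset.Icc 1 n, girsanovFactor (b k ω) (ξ k ω)

theorem girsanovDensity_succ {Ω : Type*} (ξ b : ℕ → Ω → ℝ) (n : ℕ) (ω : Ω) :
    girsanovDensity ξ b (n + 1) ω
      = girsanovDensity ξ b n ω * girsanovFactor (b (n + 1) ω) (ξ (n + 1) ω) :=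
  Finset.prod_Icc_succ_top (Nat.le_add_left 1 n) _

namespace GaussianInnovations

variable {Ω : Type*} {m0 : MeasurableSpace Ω} {P : Measure Ω} {F : Filtration ℕ m0}
  {ξ b : ℕ → Ω → ℝ} {T : ℕ}

theorem measurable_add (hξ : GaussianInnovations P F ξ T)
    (hb : ∀ n < T, Measurable[F n] (b (n + 1))) {k n : ℕ} (hk : k < n) (hn : n ≤ T) :
    Measurable[F n] fun ω => ξ (k + 1) ω + b (k + 1) ω :=
  ((hξ.adapted k).mono (F.mono hk) le_rfl).add ((hb k (by omega)).mono (F.mono hk.le) le_rfl)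

theorem measurable_girsanovDensity (hξ : GaussianInnovations P F ξ T)
    (hb : ∀ n < T, Measurable[F n] (b (n + 1))) {n : ℕ} (hn : n ≤ T) :
    Measurable[F n] (girsanovDensity ξ b n) := by
  refine Finset.measurable_prod _ fun k hk => ?_
  obtain ⟨hk1, hkn⟩ := Finset.mem_Icc.mp hk
  obtain ⟨k, rfl⟩ := Nat.exists_eq_add_of_le' hk1
  exact ((hb k (by omega)).mono (F.mono (by omega)) le_rfl).girsanovFactor
    ((hξ.adapted k).mono (F.mono hkn) le_rfl)

/-- The Cameron–Martin identity, conditionally on `F n`. -/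
theorem lintegral_mul_girsanovFactor_mul [IsFiniteMeasure P] (hξ : GaussianInnovations P F ξ T)
    {n : ℕ} (hn : n < T) (hb : Measurable[F n] (b (n + 1))) {H : Ω → ℝ≥0∞}
    (hH : Measurable[F n] H) {V : Ω → ℝ} (hV : Measurable[F n] V) {g : ℝ → ℝ → ℝ≥0∞}
    (hg : Measurable (Function.uncurry g)) :
    ∫⁻ ω, H ω * girsanovFactor (b (n + 1) ω) (ξ (n + 1) ω)
        * g (V ω) (ξ (n + 1) ω + b (n + 1) ω) ∂P
      = ∫⁻ ω, H ω * ∫⁻ x, g (V ω) x ∂gaussianReal 0 1 ∂P := by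
  have hZ : Measurable[F n] fun ω => (H ω, b (n + 1) ω, V ω) := hH.prodMk (hb.prodMk hV)
  have hind : IndepFun (fun ω => (H ω, b (n + 1) ω, V ω)) (ξ (n + 1)) P :=
    indep_of_indep_of_le_left (hξ.indep n hn) hZ.comap_le
  have hg' : Measurable fun z : (ℝ≥0∞ × ℝ × ℝ) × ℝ => g z.1.2.2 (z.2 + z.1.2.1) :=
    hg.comp (f := fun z : (ℝ≥0∞ × ℝ × ℝ) × ℝ => (z.1.2.2, z.2 + z.1.2.1)) (by fun_prop)
  rw [hind.lintegral_comp_prodMk (f := fun z => z.1.1 * girsanovFactor z.1.2.1 z.2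
      * g z.1.2.2 (z.2 + z.1.2.1)) (hZ.mono (F.le n) le_rfl)
      ((hξ.adapted n).mono (F.le _) le_rfl) (by fun_prop), hξ.map_eq n hn]
  refine lintegral_congr fun ω => ?_
  simp only [mul_assoc]
  rw [lintegral_const_mul _ (by fun_prop), lintegral_girsanovFactor_mul_comp_add _ (by fun_prop)]

theorem lintegral_girsanovDensity_mul_prod [IsProbabilityMeasure P]
    (hξ : GaussianInnovations P F ξ T) (hb : ∀ n < T, Measurable[F n] (b (n + 1)))
    {g : ℕ → ℝ → ℝ≥0∞} (hg : ∀ k, Measurable (g k)) {n : ℕ} (hn : n ≤ T) :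
    ∫⁻ ω, girsanovDensity ξ b n ω * ∏ k ∈ Finset.range n, g k (ξ (k + 1) ω + b (k + 1) ω) ∂P
      = ∏ k ∈ Finset.range n, ∫⁻ x, g k x ∂gaussianReal 0 1 := by
  induction n with
  | zero => simp [girsanovDensity]
  | succ n ih =>
    have hH : Measurable[F n] fun ω =>
        girsanovDensity ξ b n ω * ∏ k ∈ Finset.range n, g k (ξ (k + 1) ω + b (k + 1) ω) :=
      (hξ.measurable_girsanovDensity hb (by omega)).mul <| Finset.measurable_prod _ fun k hk =>
        (hg k).comp (hξ.measurable_add hb (Finset.mem_range.mp hk) (by omega))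
    have hstep := hξ.lintegral_mul_girsanovFactor_mul (by omega) (hb n (by omega)) hH
      (V := 0) measurable_const (g := fun _ x => g n x) ((hg n).comp measurable_snd)
    rw [lintegral_mul_const _ (hH.mono (F.le n) le_rfl), ih (by omega)] at hstep
    simp_rw [girsanovDensity_succ, Finset.prod_range_succ, ← hstep]
    congr with ω
    ring

theorem lintegral_girsanovDensity_mul_of_le [IsFiniteMeasure P]
    (hξ : GaussianInnovations P F ξ T) (hb : ∀ n < T, Measurable[F n] (b (n + 1)))
    {H : Ω → ℝ≥0∞} {n m : ℕ} (hH : Measurable[F n] H) (hnm : n ≤ m) (hm : m ≤ T) :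
    ∫⁻ ω, girsanovDensity ξ b m ω * H ω ∂P = ∫⁻ ω, girsanovDensity ξ b n ω * H ω ∂P := by
  induction m, hnm using Nat.le_induction with
  | base => rfl
  | succ m hnm ih =>
    have hH' : Measurable[F m] fun ω => girsanovDensity ξ b m ω * H ω :=
      (hξ.measurable_girsanovDensity hb (by omega)).mul (hH.mono (F.mono hnm) le_rfl)
    have hstep := hξ.lintegral_mul_girsanovFactor_mul (by omega) (hb m (by omega)) hH'
      (V := 0) measurable_const (g := fun _ _ => 1) measurable_const
    simp only [mul_one, lintegral_const, measure_univ] at hstep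
    rw [← ih (by omega), ← hstep]
    congr with ω
    rw [girsanovDensity_succ]
    ring

theorem lintegral_girsanovDensity_mul_exp_succ [IsFiniteMeasure P]
    (hξ : GaussianInnovations P F ξ T) (hb : ∀ n < T, Measurable[F n] (b (n + 1)))
    {H : Ω → ℝ≥0∞} {V : Ω → ℝ} {n : ℕ} (hn : n < T) (hH : Measurable[F n] H)
    (hV : Measurable[F n] V) :
    ∫⁻ ω, girsanovDensity ξ b (n + 1) ω * H ω
        * ENNReal.ofReal (exp (V ω * (ξ (n + 1) ω + b (n + 1) ω) - V ω ^ 2 / 2)) ∂P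
      = ∫⁻ ω, girsanovDensity ξ b n ω * H ω ∂P := by
  have hH' : Measurable[F n] fun ω => girsanovDensity ξ b n ω * H ω :=
    (hξ.measurable_girsanovDensity hb hn.le).mul hH
  have hstep := hξ.lintegral_mul_girsanovFactor_mul hn (hb n hn) hH' hV
    (g := fun v x => ENNReal.ofReal (exp (v * x - v ^ 2 / 2))) (by fun_prop)
  simp only [lintegral_exp_mul_sub_sq_half_gaussianReal, mul_one] at hstep
  rw [← hstep]
  congr with ω
  rw [girsanovDensity_succ]
  ring

theorem isProbabilityMeasure_withDensity_girsanovDensity [IsProbabilityMeasure P]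
    (hξ : GaussianInnovations P F ξ T) (hb : ∀ n < T, Measurable[F n] (b (n + 1))) :
    IsProbabilityMeasure (P.withDensity (girsanovDensity ξ b T)) := by
  constructor
  simpa [girsanovDensity] using
    hξ.lintegral_girsanovDensity_mul_of_le hb (H := 1) measurable_const T.zero_le le_rfl

theorem map_withDensity_girsanovDensity [IsProbabilityMeasure P]
    (hξ : GaussianInnovations P F ξ T) (hb : ∀ n < T, Measurable[F n] (b (n + 1))) :
    (P.withDensity (girsanovDensity ξ b T)).map (fun ω (i : Fin T) => ξ (i + 1) ω + b (i + 1) ω)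
      = Measure.pi fun _ => gaussianReal 0 1 := by
  have hX : Measurable fun ω (i : Fin T) => ξ (i + 1) ω + b (i + 1) ω :=
    measurable_pi_lambda _ fun i => (hξ.measurable_add hb i.isLt le_rfl).mono (F.le T) le_rfl
  refine (Measure.pi_eq fun s hs => ?_).symm
  classical
  let s' : ℕ → Set ℝ := fun k => if h : k < T then s ⟨k, h⟩ else Set.univ
  have hs' (i : Fin T) : s' i = s i := dif_pos i.isLt
  have hs'm (k : ℕ) : MeasurableSet (s' k) := by
    unfold s'
    split_ifs
    exacts [hs _, .univ]
  have hind (ω : Ω) :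
      ((fun ω (i : Fin T) => ξ (i + 1) ω + b (i + 1) ω) ⁻¹' Set.univ.pi s).indicator
          (girsanovDensity ξ b T) ω
        = girsanovDensity ξ b T ω
          * ∏ k ∈ Finset.range T, (s' k).indicator 1 (ξ (k + 1) ω + b (k + 1) ω) := by
    by_cases hω : ∀ i : Fin T, ξ (i + 1) ω + b (i + 1) ω ∈ s i
    · rw [Set.indicator_of_mem (by simpa using hω), Finset.prod_eq_one, mul_one]
      intro k hk
      exact Set.indicator_of_mem (hs' ⟨k, _⟩ ▸ hω ⟨k, Finset.mem_range.mp hk⟩) 1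
    · push Not at hω
      obtain ⟨i, hi⟩ := hω
      rw [Set.indicator_of_notMem (by simpa using ⟨i, hi⟩), Finset.prod_eq_zero
        (Finset.mem_range.mpr i.isLt) (Set.indicator_of_notMem (hs' i ▸ hi : _ ∉ s' i) _),
        mul_zero]
  rw [Measure.map_apply hX (.univ_pi hs), withDensity_apply _ (hX (.univ_pi hs)),
    ← lintegral_indicator (hX (.univ_pi hs)), lintegral_congr hind,
    hξ.lintegral_girsanovDensity_mul_prod hb (fun k => measurable_one.indicator (hs'm k)) le_rfl,
    ← Fin.prod_univ_eq_prod_range]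
  simp_rw [lintegral_indicator_one (hs'm _), hs']

theorem iIndepFun_withDensity_girsanovDensity [IsProbabilityMeasure P]
    (hξ : GaussianInnovations P F ξ T) (hb : ∀ n < T, Measurable[F n] (b (n + 1))) :
    iIndepFun (fun (i : Fin T) ω => ξ (i + 1) ω + b (i + 1) ω)
      (P.withDensity (girsanovDensity ξ b T)) :=
  iIndepFun_of_map_fun_eq_pi (fun i => (hξ.measurable_add hb i.isLt le_rfl).mono (F.le T) le_rfl)
    (hξ.map_withDensity_girsanovDensity hb)

theorem map_add_withDensity_girsanovDensity [IsProbabilityMeasure P]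
    (hξ : GaussianInnovations P F ξ T) (hb : ∀ n < T, Measurable[F n] (b (n + 1))) {n : ℕ}
    (hn : n < T) :
    (P.withDensity (girsanovDensity ξ b T)).map (fun ω => ξ (n + 1) ω + b (n + 1) ω)
      = gaussianReal 0 1 :=
  map_eq_of_map_fun_eq_pi (f := fun (i : Fin T) ω => ξ (i + 1) ω + b (i + 1) ω)
    (fun i => (hξ.measurable_add hb i.isLt le_rfl).mono (F.le T) le_rfl)
    (hξ.map_withDensity_girsanovDensity hb) ⟨n, hn⟩

variable {s V : ℕ → Ω → ℝ} {c : ℝ}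

theorem measurable_logPrice (hξ : GaussianInnovations P F ξ T)
    (hb : ∀ n < T, Measurable[F n] (b (n + 1))) (hV : ∀ n < T, Measurable[F n] (V (n + 1)))
    (hs0 : ∀ ω, s 0 ω = c)
    (hs : ∀ n < T, ∀ ω, s (n + 1) ω
      = s n ω + V (n + 1) ω * (ξ (n + 1) ω + b (n + 1) ω) - V (n + 1) ω ^ 2 / 2)
    {n : ℕ} (hn : n ≤ T) : Measurable[F n] (s n) := by
  induction n with
  | zero =>
    rw [funext hs0]
    exact measurable_const
  | succ n ih =>
    have hVn := (hV n (by omega)).mono (F.mono n.le_succ) le_rfl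
    rw [funext (hs n (by omega))]
    exact (((ih (by omega)).mono (F.mono n.le_succ) le_rfl).add
      (hVn.mul (hξ.measurable_add hb n.lt_succ_self hn))).sub ((hVn.pow_const 2).div_const 2)

theorem setLIntegral_exp_logPrice [IsFiniteMeasure P] (hξ : GaussianInnovations P F ξ T)
    (hb : ∀ n < T, Measurable[F n] (b (n + 1))) (hV : ∀ n < T, Measurable[F n] (V (n + 1)))
    (hs0 : ∀ ω, s 0 ω = c)
    (hs : ∀ n < T, ∀ ω, s (n + 1) ω
      = s n ω + V (n + 1) ω * (ξ (n + 1) ω + b (n + 1) ω) - V (n + 1) ω ^ 2 / 2)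
    {i j : ℕ} (hij : i ≤ j) (hj : j ≤ T) {A : Set Ω} (hA : MeasurableSet[F i] A) :
    ∫⁻ ω in A, ENNReal.ofReal (exp (s j ω)) ∂P.withDensity (girsanovDensity ξ b T)
      = ∫⁻ ω in A, ENNReal.ofReal (exp (s i ω)) ∂P.withDensity (girsanovDensity ξ b T) := by
  have hS {n : ℕ} (hn : n ≤ T) : Measurable[F n] fun ω => ENNReal.ofReal (exp (s n ω)) :=
    (hξ.measurable_logPrice hb hV hs0 hs hn).exp.ennreal_ofReal
  let E n := A.indicator fun ω => ENNReal.ofReal (exp (s n ω))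
  have hE {n : ℕ} (hin : i ≤ n) (hn : n ≤ T) : Measurable[F n] (E n) :=
    (hS hn).indicator (F.mono hin A hA)
  have hdensity {n : ℕ} (hin : i ≤ n) (hn : n ≤ T) :
      ∫⁻ ω in A, ENNReal.ofReal (exp (s n ω)) ∂P.withDensity (girsanovDensity ξ b T)
        = ∫⁻ ω, girsanovDensity ξ b n ω * E n ω ∂P := by
    rw [setLIntegral_withDensity_eq_setLIntegral_mul _
        ((hξ.measurable_girsanovDensity hb le_rfl).mono (F.le T) le_rfl)
        ((hS hn).mono (F.le n) le_rfl) (F.le i A hA),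
      ← hξ.lintegral_girsanovDensity_mul_of_le hb (hE hin hn) hn le_rfl,
      ← lintegral_indicator (F.le i A hA)]
    congr with ω
    by_cases hω : ω ∈ A <;> simp [E, hω]
  rw [hdensity hij hj, hdensity le_rfl (hij.trans hj)]
  induction j, hij using Nat.le_induction with
  | base => rfl
  | succ j hij ih =>
    rw [← ih (by omega), ← hξ.lintegral_girsanovDensity_mul_exp_succ hb (by omega)
      (hE hij (by omega)) (hV j (by omega))]
    congr with ω
    by_cases hω : ω ∈ A
    · simp only [E, Set.indicator_of_mem hω, hs j (by omega), add_sub_assoc, exp_add,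
        ENNReal.ofReal_mul (exp_nonneg _), mul_assoc]
    · simp [E, hω]

theorem integrable_exp_logPrice [IsProbabilityMeasure P] (hξ : GaussianInnovations P F ξ T)
    (hb : ∀ n < T, Measurable[F n] (b (n + 1))) (hV : ∀ n < T, Measurable[F n] (V (n + 1)))
    (hs0 : ∀ ω, s 0 ω = c)
    (hs : ∀ n < T, ∀ ω, s (n + 1) ω
      = s n ω + V (n + 1) ω * (ξ (n + 1) ω + b (n + 1) ω) - V (n + 1) ω ^ 2 / 2)
    {n : ℕ} (hn : n ≤ T) :
    Integrable (fun ω => exp (s n ω)) (P.withDensity (girsanovDensity ξ b T)) := by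
  have := hξ.isProbabilityMeasure_withDensity_girsanovDensity hb
  refine ⟨((hξ.measurable_logPrice hb hV hs0 hs hn).mono (F.le n) le_rfl).exp
    |>.aestronglyMeasurable,
    (hasFiniteIntegral_iff_ofReal (ae_of_all _ fun ω => (exp_pos _).le)).mpr ?_⟩
  have h := hξ.setLIntegral_exp_logPrice hb hV hs0 hs n.zero_le hn MeasurableSet.univ
  simp only [Measure.restrict_univ, hs0, lintegral_const, measure_univ, mul_one] at h
  exact h ▸ ENNReal.ofReal_lt_top

theorem condExp_exp_logPrice [IsProbabilityMeasure P] (hξ : GaussianInnovations P F ξ T)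
    (hb : ∀ n < T, Measurable[F n] (b (n + 1))) (hV : ∀ n < T, Measurable[F n] (V (n + 1)))
    (hs0 : ∀ ω, s 0 ω = c)
    (hs : ∀ n < T, ∀ ω, s (n + 1) ω
      = s n ω + V (n + 1) ω * (ξ (n + 1) ω + b (n + 1) ω) - V (n + 1) ω ^ 2 / 2)
    {i j : ℕ} (hij : i ≤ j) (hj : j ≤ T) :
    (P.withDensity (girsanovDensity ξ b T))[fun ω => exp (s j ω) | F i]
      =ᵐ[P.withDensity (girsanovDensity ξ b T)] fun ω => exp (s i ω) := by
  have := hξ.isProbabilityMeasure_withDensity_girsanovDensity hb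
  have hint {n : ℕ} (hn : n ≤ T) := hξ.integrable_exp_logPrice hb hV hs0 hs hn
  refine (ae_eq_condExp_of_forall_setIntegral_eq (F.le i) (hint hj)
    (fun A _ _ => (hint (hij.trans hj)).integrableOn) (fun A hA _ => ?_)
    (hξ.measurable_logPrice hb hV hs0 hs (hij.trans hj)).exp.aestronglyMeasurable).symm
  rw [integral_eq_lintegral_of_nonneg_ae (ae_of_all _ fun ω => (exp_pos _).le)
      (hint (hij.trans hj)).aestronglyMeasurable.restrict,
    integral_eq_lintegral_of_nonneg_ae (ae_of_all _ fun ω => (exp_pos _).le)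
      (hint hj).aestronglyMeasurable.restrict,
    hξ.setLIntegral_exp_logPrice hb hV hs0 hs hij hj hA]

end GaussianInnovations

section InnovationFiltration

variable {Ω : Type*} {m0 : MeasurableSpace Ω}

def innovationFiltration (ξ : ℕ → Ω → ℝ) (hξ : ∀ n, Measurable (ξ n)) : Filtration ℕ m0 where
  seq n := ⨆ k ∈ Finset.Icc 1 n, MeasurableSpace.comap (ξ k) inferInstance
  mono' _ _ h := biSup_mono fun _ hk => Finset.Icc_subset_Icc_right h hk
  le' _ := iSup₂_le fun k _ => (hξ k).comap_le

theorem measurable_innovationFiltration {ξ : ℕ → Ω → ℝ} (hξ : ∀ n, Measurable (ξ n)) {k n : ℕ}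
    (hk : k ∈ Finset.Icc 1 n) : Measurable[innovationFiltration ξ hξ n] (ξ k) :=
  Measurable.of_comap_le <| le_iSup₂ (f := fun k (_ : k ∈ Finset.Icc 1 n) =>
    MeasurableSpace.comap (ξ k) inferInstance) k hk

theorem measurable_innovationFiltration_of_le {ε : ℤ → Ω → ℝ} (hε : ∀ k, Measurable (ε k))
    (hεinit : ∀ k : ℤ, k ≤ 0 → ∃ c : ℝ, ∀ ω, ε k ω = c) {n : ℕ} {k : ℤ} (hkn : k ≤ n) :
    Measurable[innovationFiltration (fun k => ε k) (fun k => hε k) n] (ε k) := by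
  rcases le_or_gt k 0 with hk0 | hk1
  · obtain ⟨c, hc⟩ := hεinit k hk0
    rw [funext hc]
    exact measurable_const
  · lift k to ℕ using hk1.le
    exact measurable_innovationFiltration _ (Finset.mem_Icc.mpr ⟨by omega, by omega⟩)

theorem gaussianInnovations_innovationFiltration {P : Measure Ω} {ξ : ℕ → Ω → ℝ}
    (hξ : ∀ n, Measurable (ξ n)) {T : ℕ} (hind : iIndepFun (fun i : Fin T => ξ (i + 1)) P)
    (hlaw : ∀ n < T, P.map (ξ (n + 1)) = gaussianReal 0 1) :
    GaussianInnovations P (innovationFiltration ξ hξ) ξ T where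
  adapted n := measurable_innovationFiltration hξ (by simp)
  indep n hn := by
    have h := indep_iSup_of_disjoint (fun i => (hξ _).comap_le) hind.iIndep
      (S := {i : Fin T | i.val < n}) (T := {⟨n, hn⟩}) (by simp)
    simp only [Set.mem_singleton_iff, iSup_iSup_eq_left] at h
    refine indep_of_indep_of_le_left h (iSup₂_le fun k hk => ?_)
    obtain ⟨hk1, hkn⟩ := Finset.mem_Icc.mp hk
    obtain ⟨k, rfl⟩ := Nat.exists_eq_add_of_le' hk1
    exact le_iSup₂ (f := fun (i : Fin T) (_ : i ∈ {i : Fin T | i.val < n}) =>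
      MeasurableSpace.comap (ξ (i + 1)) inferInstance) ⟨k, by omega⟩ (by simpa using hkn)
  map_eq := hlaw

end InnovationFiltration

theorem measurable_hestonNandi_volatility {Ω : Type*} {m0 : MeasurableSpace Ω}
    {F : Filtration ℕ m0} {T p q : ℕ} {α0 : ℝ} {α β γ : ℕ → ℝ} {ε σ : ℤ → Ω → ℝ}
    (hε : ∀ (n : ℕ) (k : ℤ), k ≤ n → Measurable[F n] (ε k))
    (hσinit : ∀ k : ℤ, k ≤ 0 → ∃ c : ℝ, ∀ ω, σ k ω = c) (hσpos : ∀ k ω, 0 < σ k ω)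
    (hσrec : ∀ n : ℤ, 1 ≤ n → n ≤ (T : ℤ) → ∀ ω,
        σ n ω ^ 2 = α0
          + (∑ i ∈ Finset.Icc 1 q, α i * (ε (n - i) ω - γ i * σ (n - i) ω) ^ 2)
          + ∑ j ∈ Finset.Icc 1 p, β j * σ (n - j) ω ^ 2)
    {k : ℤ} (hkT : k ≤ T) {n : ℕ} (hkn : k ≤ n + 1) : Measurable[F n] (σ k) := by
  induction hK : k.toNat using Nat.strong_induction_on generalizing k with
  | _ K ih =>
    rcases le_or_gt k 0 with hk0 | hk1
    · obtain ⟨c, hc⟩ := hσinit k hk0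
      rw [funext hc]
      exact measurable_const
    have hlag {i : ℕ} (hi : 1 ≤ i) : Measurable[F n] (σ (k - i)) :=
      ih (k - i).toNat (by omega) (by omega) (by omega) rfl
    have hsqrt : σ k = fun ω => √(α0
        + (∑ i ∈ Finset.Icc 1 q, α i * (ε (k - i) ω - γ i * σ (k - i) ω) ^ 2)
        + ∑ j ∈ Finset.Icc 1 p, β j * σ (k - j) ω ^ 2) :=
      funext fun ω => by rw [← hσrec k hk1 hkT ω, Real.sqrt_sq (hσpos k ω).le]
    rw [hsqrt]
    refine ((measurable_const.add (Finset.measurable_sum _ fun i hi => ?_)).add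
      (Finset.measurable_sum _ fun j hj => ?_)).sqrt
    · have hi1 := (Finset.mem_Icc.mp hi).1
      exact measurable_const.mul
        (((hε n (k - i) (by omega)).sub (measurable_const.mul (hlag hi1))).pow_const 2)
    · exact measurable_const.mul ((hlag (Finset.mem_Icc.mp hj).1).pow_const 2)

theorem stmt18_general {Ω : Type*} {m0 : MeasurableSpace Ω}
    (P : Measure Ω) [IsProbabilityMeasure P]
    (T p q : ℕ) (lam α0 : ℝ) (α β : ℕ → ℝ) (γ : ℕ → ℝ)
    (ε : ℤ → Ω → ℝ) (hεmeas : ∀ k, Measurable (ε k))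
    (hεindep : iIndepFun (fun i : Fin T => ε ((i.val : ℤ) + 1)) P)
    (hεgauss : ∀ k : ℤ, 1 ≤ k → k ≤ (T : ℤ) → Measure.map (ε k) P = gaussianReal 0 1)
    (hεinit : ∀ k : ℤ, k ≤ 0 → ∃ c : ℝ, 0 < c ∧ ∀ ω, ε k ω = c)
    (σ : ℤ → Ω → ℝ) (hσpos : ∀ k ω, 0 < σ k ω)
    (hσinit : ∀ k : ℤ, k ≤ 0 → ∃ c : ℝ, 0 < c ∧ ∀ ω, σ k ω = c)
    (hσrec : ∀ n : ℤ, 1 ≤ n → n ≤ (T : ℤ) → ∀ ω,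
        σ n ω ^ 2 = α0
          + (∑ i ∈ Finset.Icc 1 q, α i * (ε (n - i) ω - γ i * σ (n - i) ω) ^ 2)
          + ∑ j ∈ Finset.Icc 1 p, β j * σ (n - j) ω ^ 2)
    (F : ℕ → MeasurableSpace Ω)
    (hF : ∀ n : ℕ, F n = ⨆ k ∈ Finset.Icc 1 n,
        MeasurableSpace.comap (ε (k : ℤ)) inferInstance)
    (s : ℕ → Ω → ℝ) (hs0 : ∃ c : ℝ, ∀ ω, s 0 ω = c)
    (hs : ∀ n : ℕ, 1 ≤ n → n ≤ T → ∀ ω,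
        s n ω - s (n - 1) ω = lam * σ (n : ℤ) ω ^ 2 + σ (n : ℤ) ω * ε (n : ℤ) ω)
    (S : ℕ → Ω → ℝ) (hS : ∀ n ω, S n ω = Real.exp (s n ω))
    (Q : Measure Ω)
    (hQ : Q = P.withDensity fun ω => ENNReal.ofReal
        (∏ k ∈ Finset.Icc 1 T, Real.exp
          (-((lam + 1 / 2) * σ (k : ℤ) ω * ε (k : ℤ) ω)
            - (lam + 1 / 2) ^ 2 * σ (k : ℤ) ω ^ 2 / 2))) :
    (iIndepFun
        (fun i : Fin T => fun ω =>
          ε ((i.val : ℤ) + 1) ω + (lam + 1 / 2) * σ ((i.val : ℤ) + 1) ω) Q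
      ∧ ∀ k : ℤ, 1 ≤ k → k ≤ (T : ℤ) →
          Measure.map (fun ω => ε k ω + (lam + 1 / 2) * σ k ω) Q = gaussianReal 0 1)
    ∧ (∀ n : ℕ, 1 ≤ n → n ≤ T → ∀ ω,
        (s n ω - s (n - 1) ω
            = -σ (n : ℤ) ω ^ 2 / 2
              + σ (n : ℤ) ω * (ε (n : ℤ) ω + (lam + 1 / 2) * σ (n : ℤ) ω))
        ∧ σ (n : ℤ) ω ^ 2
            = α0 + (∑ i ∈ Finset.Icc 1 q, α i *
                ((ε ((n : ℤ) - i) ω + (lam + 1 / 2) * σ ((n : ℤ) - i) ω)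
                  - (lam + γ i + 1 / 2) * σ ((n : ℤ) - i) ω) ^ 2)
              + ∑ j ∈ Finset.Icc 1 p, β j * σ ((n : ℤ) - j) ω ^ 2)
    ∧ ((∀ n, n ≤ T → Integrable (S n) Q)
        ∧ ∀ i j : ℕ, i ≤ j → j ≤ T → Q[S j | F i] =ᵐ[Q] S i) := by
  obtain ⟨c, hc⟩ := hs0
  let ξ : ℕ → Ω → ℝ := fun k => ε k
  let b : ℕ → Ω → ℝ := fun k ω => (lam + 1 / 2) * σ k ω
  let 𝓕 := innovationFiltration ξ fun k => hεmeas k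
  have hG : GaussianInnovations P 𝓕 ξ T :=
    gaussianInnovations_innovationFiltration _ (by simpa [ξ] using hεindep)
      fun n hn => by simpa [ξ] using hεgauss (n + 1) (by omega) (by omega)
  have hσ (n : ℕ) (hn : n < T) : Measurable[𝓕 n] (σ (n + 1 : ℕ)) :=
    measurable_hestonNandi_volatility
      (fun _ _ => measurable_innovationFiltration_of_le hεmeas fun k hk =>
        (hεinit k hk).imp fun _ h => h.2)
      (fun k hk => (hσinit k hk).imp fun _ h => h.2) hσpos hσrec (by omega) (by omega)
  have hb (n : ℕ) (hn : n < T) : Measurable[𝓕 n] (b (n + 1)) := (hσ n hn).const_mul _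
  have hs' (n : ℕ) (hn : n < T) (ω : Ω) : s (n + 1) ω = s n ω
      + σ (n + 1 : ℕ) ω * (ξ (n + 1) ω + b (n + 1) ω) - σ (n + 1 : ℕ) ω ^ 2 / 2 := by
    have := hs (n + 1) (by omega) (by omega) ω
    simp only [add_tsub_cancel_right] at this
    simp only [ξ, b]
    linarith
  obtain rfl : Q = P.withDensity (girsanovDensity ξ b T) := by
    rw [hQ]
    congr with ω
    simp only [ENNReal.ofReal_prod_of_nonneg fun _ _ => (exp_pos _).le, girsanovDensity,
      girsanovFactor, b, ξ, mul_pow]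
  refine ⟨⟨hG.iIndepFun_withDensity_girsanovDensity hb, fun k hk1 hkT => ?_⟩,
    fun n hn1 hnT ω => ⟨?_, ?_⟩, fun n hn => ?_, fun i j hij hj => ?_⟩
  · obtain ⟨m, rfl⟩ : ∃ m : ℕ, k = m + 1 := ⟨(k - 1).toNat, by omega⟩
    exact hG.map_add_withDensity_girsanovDensity hb (by omega)
  · rw [hs n hn1 hnT ω]
    ring
  · rw [hσrec n (by omega) (by omega) ω]
    congr 2
    exact Finset.sum_congr rfl fun i _ => by ring
  · rw [funext (hS n)]
    exact hG.integrable_exp_logPrice hb (V := fun k => σ k) hσ hc hs' hn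
  · rw [funext (hS j), funext (hS i), hF i]
    exact hG.condExp_exp_logPrice hb (V := fun k => σ k) hσ hc hs' hij hj

/-- (Heston–Nandi model under the Girsanov-type measure.) For the
Heston–Nandi log-prices `s_n - s_{n-1} = λσ_n² + σ_nε_n` with
`σ_n² = α₀ + Σ α_i(ε_{n-i} - γ_iσ_{n-i})² + Σ β_j σ_{n-j}²` (strictly positive
deterministic initial data) and prices `S_n = exp(s_n)`, under the measure `Q` with
density `Π_{k=1}^T exp(-(λ+½)σ_kε_k - (λ+½)²σ_k²/2)`: (a) `ε̃_n = ε_n + (λ+½)σ_n` are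
i.i.d. standard normal under `Q`; (b) `s_n - s_{n-1} = -σ_n²/2 + σ_nε̃_n` and
`σ_n² = α₀ + Σ α_i(ε̃_{n-i} - (λ+γ_i+½)σ_{n-i})² + Σ β_j σ_{n-j}²`; and (c) `(S_n)` is a
`(F_n)`-martingale under `Q`. -/
theorem stmt18 {Ω : Type*} {m0 : MeasurableSpace Ω}
    (P : Measure Ω) [IsProbabilityMeasure P]
    (T p q : ℕ) (lam α0 : ℝ) (α β : ℕ → ℝ) (γ : ℕ → ℝ) (hα0 : 0 < α0)
    (hα : ∀ i ∈ Finset.Icc 1 q, 0 ≤ α i) (hβ : ∀ j ∈ Finset.Icc 1 p, 0 ≤ β j)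
    (ε : ℤ → Ω → ℝ) (hεmeas : ∀ k, Measurable (ε k))
    (hεindep : iIndepFun (fun i : Fin T => ε ((i.val : ℤ) + 1)) P)
    (hεgauss : ∀ k : ℤ, 1 ≤ k → k ≤ (T : ℤ) → Measure.map (ε k) P = gaussianReal 0 1)
    (hεinit : ∀ k : ℤ, k ≤ 0 → ∃ c : ℝ, 0 < c ∧ ∀ ω, ε k ω = c)
    (σ : ℤ → Ω → ℝ) (hσpos : ∀ k ω, 0 < σ k ω)
    (hσinit : ∀ k : ℤ, k ≤ 0 → ∃ c : ℝ, 0 < c ∧ ∀ ω, σ k ω = c)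
    (hσrec : ∀ n : ℤ, 1 ≤ n → n ≤ (T : ℤ) → ∀ ω,
        σ n ω ^ 2 = α0
          + (∑ i ∈ Finset.Icc 1 q, α i * (ε (n - i) ω - γ i * σ (n - i) ω) ^ 2)
          + ∑ j ∈ Finset.Icc 1 p, β j * σ (n - j) ω ^ 2)
    (F : ℕ → MeasurableSpace Ω)
    (hF : ∀ n : ℕ, F n = ⨆ k ∈ Finset.Icc 1 n,
        MeasurableSpace.comap (ε (k : ℤ)) inferInstance)
    (s : ℕ → Ω → ℝ) (hs0 : ∃ c : ℝ, ∀ ω, s 0 ω = c)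
    (hs : ∀ n : ℕ, 1 ≤ n → n ≤ T → ∀ ω,
        s n ω - s (n - 1) ω = lam * σ (n : ℤ) ω ^ 2 + σ (n : ℤ) ω * ε (n : ℤ) ω)
    (S : ℕ → Ω → ℝ) (hS : ∀ n ω, S n ω = Real.exp (s n ω))
    (Q : Measure Ω)
    (hQ : Q = P.withDensity fun ω => ENNReal.ofReal
        (∏ k ∈ Finset.Icc 1 T, Real.exp
          (-((lam + 1 / 2) * σ (k : ℤ) ω * ε (k : ℤ) ω)
            - (lam + 1 / 2) ^ 2 * σ (k : ℤ) ω ^ 2 / 2))) :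
    (iIndepFun
        (fun i : Fin T => fun ω =>
          ε ((i.val : ℤ) + 1) ω + (lam + 1 / 2) * σ ((i.val : ℤ) + 1) ω) Q
      ∧ ∀ k : ℤ, 1 ≤ k → k ≤ (T : ℤ) →
          Measure.map (fun ω => ε k ω + (lam + 1 / 2) * σ k ω) Q = gaussianReal 0 1)
    ∧ (∀ n : ℕ, 1 ≤ n → n ≤ T → ∀ ω,
        (s n ω - s (n - 1) ω
            = -σ (n : ℤ) ω ^ 2 / 2
              + σ (n : ℤ) ω * (ε (n : ℤ) ω + (lam + 1 / 2) * σ (n : ℤ) ω))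
        ∧ σ (n : ℤ) ω ^ 2
            = α0 + (∑ i ∈ Finset.Icc 1 q, α i *
                ((ε ((n : ℤ) - i) ω + (lam + 1 / 2) * σ ((n : ℤ) - i) ω)
                  - (lam + γ i + 1 / 2) * σ ((n : ℤ) - i) ω) ^ 2)
              + ∑ j ∈ Finset.Icc 1 p, β j * σ ((n : ℤ) - j) ω ^ 2)
    ∧ ((∀ n, n ≤ T → Integrable (S n) Q)
        ∧ ∀ i j : ℕ, i ≤ j → j ≤ T → Q[S j | F i] =ᵐ[Q] S i) :=
  stmt18_general (m0 := m0) P T p q lam α0 α β γ ε hεmeas hεindep hεgauss hεinit σ hσpos hσinit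
    hσrec F hF s hs0 hs S hS Q hQ
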